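/- arXiv:1609.09669 — 3 statements merged into one kernel-verified Lean document; each statement's English description precedes it below -/
import Mathlib

section
/- If C is a relative two-weight Z2Z4-additive code C(m1, m) to the subcode C1 in Z2^α × Z4^β, then m1 is even. -/
/-- Lee weight of an element of `ZMod 4`: wt_L(0)=0, wt_L(1)=1, wt_L(2)=2, wt_L(3)=1. -/
def leeWt4 (a : ZMod 4) : ℕ := min a.val (4 - a.val)

/-- The Lee weight of an element `(u|v)` of `Z2^α × Z4^β`:
`wt(u|v) = wt_H(u) + wt_L(v)`. -/
def leeWt {α β : ℕ} (c : (Fin α → ZMod 2) × (Fin β → ZMod 4)) : ℕ :=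
  hammingNorm c.1 + ∑ j, leeWt4 (c.2 j)

/-- The Lee distance on `Z2^α × Z4^β`: `d(x,y) = wt(x - y)`. -/
def leeDist {α β : ℕ} (x y : (Fin α → ZMod 2) × (Fin β → ZMod 4)) : ℕ :=
  leeWt (x - y)

/-- The Gray map φ : Z4 → Z2², with φ(0)=(0,0), φ(1)=(0,1), φ(2)=(1,1), φ(3)=(1,0). -/
def gray (a : ZMod 4) : Fin 2 → ZMod 2 :=
  ![if 2 ≤ a.val then 1 else 0, if a.val = 1 ∨ a.val = 2 then 1 else 0]

/-- The extended Gray map Φ : Z2^α × Z4^β → Z2^{α+2β}, Φ(u|v) = (u|φ(v))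
(indexing the `α + 2β` binary coordinates by `Fin α ⊕ Fin β × Fin 2`). -/
def grayMap {α β : ℕ} (c : (Fin α → ZMod 2) × (Fin β → ZMod 4)) :
    Fin α ⊕ Fin β × Fin 2 → ZMod 2 :=
  Sum.elim c.1 fun p => gray (c.2 p.1) p.2

/-- Parity of the Lee weight on `ZMod 4` is additive under subtraction. -/
lemma par4 : ∀ a b : ZMod 4, ((leeWt4 (a - b) : ZMod 2)) = leeWt4 a + leeWt4 b := by decide

/-- Parity of the coordinate-wise Hamming indicator on `ZMod 2`. -/
lemma par2 : ∀ a b : ZMod 2,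
    ((if a - b ≠ 0 then (1:ℕ) else 0 : ℕ) : ZMod 2)
      = (if a ≠ 0 then 1 else 0) + (if b ≠ 0 then 1 else 0) := by decide

lemma hn_cast {n : ℕ} (u v : Fin n → ZMod 2) :
    ((hammingNorm (u - v) : ZMod 2)) = hammingNorm u + hammingNorm v := by
  simp only [hammingNorm, Finset.card_filter, Nat.cast_sum]
  rw [← Finset.sum_add_distrib]
  exact Finset.sum_congr rfl fun i _ => by simpa using par2 (u i) (v i)

/-- Mod 2, the Lee weight of a difference is the sum of the Lee weights. -/
lemma leeWt_parity {α β : ℕ} (x y : (Fin α → ZMod 2) × (Fin β → ZMod 4)) :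
    ((leeWt (x - y) : ZMod 2)) = leeWt x + leeWt y := by
  simp only [leeWt, Nat.cast_add]
  have h1 : ((hammingNorm ((x - y).1) : ℕ) : ZMod 2) = hammingNorm x.1 + hammingNorm y.1 :=
    hn_cast x.1 y.1
  have h2 : ((∑ j, leeWt4 ((x - y).2 j) : ℕ) : ZMod 2)
      = ((∑ j, leeWt4 (x.2 j) : ℕ) : ZMod 2) + ((∑ j, leeWt4 (y.2 j) : ℕ) : ZMod 2) := by
    push_cast
    rw [← Finset.sum_add_distrib]
    exact Finset.sum_congr rfl fun j _ => par4 (x.2 j) (y.2 j)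
  rw [h1, h2]; push_cast; ring

/-- For a relative two-weight `Z2Z4`-additive code `C(m1, m)` to the subcode `C1`,
the weight `m1` must be even. -/
theorem relativeTwoWeight_m1_even {α β : ℕ} (hαβ : 0 < α + β)
    (C C1 : AddSubgroup ((Fin α → ZMod 2) × (Fin β → ZMod 4)))
    (hsub : C1 ≤ C) (hC1ne : C1 ≠ ⊥) (hproper : C1 ≠ C)
    (m1 m : ℕ) (hm1 : 0 < m1) (hm : 0 < m)
    (hw1 : ∀ c ∈ C1, c ≠ 0 → leeWt c = m1)
    (hw : ∀ c ∈ C, c ∉ C1 → leeWt c = m) :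
    Even m1 := by
  obtain ⟨c, hcC1, hc0⟩ : ∃ c ∈ C1, c ≠ 0 := by
    by_contra h
    push_neg at h
    exact hC1ne (by
      ext z
      simp only [AddSubgroup.mem_bot]
      exact ⟨fun hz => by by_contra hz0; exact hz0 (h z hz),
        fun hz => hz ▸ C1.zero_mem⟩)
  obtain ⟨x, hxC, hxC1⟩ : ∃ x ∈ C, x ∉ C1 := by
    by_contra h
    push_neg at h
    exact hproper (le_antisymm hsub h)
  have hxc : x + c ∉ C1 := fun h => hxC1 (by simpa using C1.sub_mem h hcC1)
  have hwxc : leeWt (x + c) = m := hw _ (C.add_mem hxC (hsub hcC1)) hxc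
  have hwx : leeWt x = m := hw _ hxC hxC1
  have hwc : leeWt c = m1 := hw1 _ hcC1 hc0
  have key : ((m1 : ZMod 2)) = 0 := by
    have h1 := leeWt_parity (x + c) x
    rw [add_sub_cancel_left, hwc, hwxc, hwx] at h1
    rw [h1, ← two_mul]
    simp only [mul_eq_zero]
    exact Or.inl (by decide)
  rw [Nat.even_iff, ← Nat.dvd_iff_mod_eq_zero]
  exact (ZMod.natCast_eq_zero_iff m1 2).mp key
end

section
/- Let C be a Z2Z4-additive code in Z2^α × Z4^β. Then every codeword of C has even Lee weight if and only if (1_α|2_β) ∈ C⊥, where 1_α = (1,…,1) ∈ Z2^α and 2_β = (2,…,2) ∈ Z4^β. -/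
/-- The inner product on `Z2^α × Z4^β`:
`⟨(u1|v1),(u2|v2)⟩ = 2⟨u1,u2⟩ + ⟨v1,v2⟩ ∈ Z4`, where binary entries are regarded as
`0, 1` in `Z4` and all computations are carried out in `Z4`. -/
def innerProd {α β : ℕ} (x y : (Fin α → ZMod 2) × (Fin β → ZMod 4)) : ZMod 4 :=
  2 * ∑ i, ((x.1 i).val : ZMod 4) * ((y.1 i).val : ZMod 4) + ∑ j, x.2 j * y.2 j

/-- The dual code `C⊥ = {x : ⟨x,c⟩ = 0 for all c ∈ C}`. -/
def dualCode {α β : ℕ} (C : AddSubgroup ((Fin α → ZMod 2) × (Fin β → ZMod 4))) :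
    Set ((Fin α → ZMod 2) × (Fin β → ZMod 4)) :=
  {x | ∀ c ∈ C, innerProd x c = 0}

lemma hammingNorm_eq_sum_val {α : ℕ} (u : Fin α → ZMod 2) :
    hammingNorm u = ∑ i, (u i).val := by
  rw [hammingNorm, Finset.card_filter]
  refine Finset.sum_congr rfl fun i _ => ?_
  have h : ∀ a : ZMod 2, (if a ≠ 0 then 1 else 0) = a.val := by decide
  exact h (u i)

lemma leeWt4_mod_two (a : ZMod 4) : leeWt4 a % 2 = a.val % 2 := by
  revert a; decide

lemma key {α β : ℕ} (c : (Fin α → ZMod 2) × (Fin β → ZMod 4)) :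
    (Even (leeWt c) ↔
      innerProd (((fun _ => 1), (fun _ => 2)) :
        (Fin α → ZMod 2) × (Fin β → ZMod 4)) c = 0) := by
  set N : ℕ := (∑ i, (c.1 i).val) + ∑ j, (c.2 j).val with hN
  have h1 : Even (leeWt c) ↔ 2 ∣ N := by
    have : leeWt c % 2 = N % 2 := by
      rw [leeWt, hammingNorm_eq_sum_val, hN, Nat.add_mod,
        Nat.add_mod (∑ i, (c.1 i).val), Finset.sum_nat_mod _ 2 (fun j => leeWt4 (c.2 j)),
        Finset.sum_nat_mod _ 2 (fun j => (c.2 j).val)]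
      congr 2
      congr 1
      exact Finset.sum_congr rfl fun j _ => leeWt4_mod_two _
    rw [Nat.even_iff, this, Nat.dvd_iff_mod_eq_zero]
  have h2 : innerProd (((fun _ => 1), (fun _ => 2)) :
      (Fin α → ZMod 2) × (Fin β → ZMod 4)) c = 2 * (N : ZMod 4) := by
    rw [innerProd, hN]
    push_cast
    rw [mul_add]
    congr 1
    · rw [Finset.mul_sum, Finset.mul_sum]
      refine Finset.sum_congr rfl fun i _ => ?_
      show 2 * (((1 : ZMod 2).val : ZMod 4) * _) = _
      norm_num [ZMod.val_one]
    · rw [Finset.mul_sum]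
      refine Finset.sum_congr rfl fun j _ => ?_
      show (2 : ZMod 4) * c.2 j = 2 * ((c.2 j).val : ZMod 4)
      rw [ZMod.natCast_val, ZMod.cast_id]
  rw [h1, h2]
  have : (2 : ZMod 4) * (N : ZMod 4) = (((2 * N : ℕ) : ZMod 4)) := by push_cast; ring
  rw [this, ZMod.natCast_eq_zero_iff]
  omega

/-- Every codeword of a `Z2Z4`-additive code `C` has even Lee weight if and only if
`(1_α|2_β) ∈ C⊥`. -/
theorem allEvenWeight_iff_all1all2_mem_dual {α β : ℕ} (hαβ : 0 < α + β)
    (C : AddSubgroup ((Fin α → ZMod 2) × (Fin β → ZMod 4))) :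
    (∀ c ∈ C, Even (leeWt c)) ↔
      ((fun _ => 1), (fun _ => 2)) ∈ dualCode C := by
  simp only [dualCode, Set.mem_setOf_eq]
  exact forall₂_congr fun c _ => key c
end

section
/- Let C be a relative two-weight Z2Z4-additive code C(m1, m) to the subcode C1 in Z2^α × Z4^β. Then for every codeword c = (u|v) ∈ C1, the number of coordinates of v that are units of Z4 (i.e., equal to 1 or 3) is either 0 or m1/2. -/
lemma leeWt4_double : ∀ a : ZMod 4,
    leeWt4 (a + a) = (if a = 1 ∨ a = 3 then 2 else 0) := by decide

/-- For a relative two-weight `Z2Z4`-additive code `C(m1, m)` to the subcode `C1`,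
each codeword `(u|v) ∈ C1` has either `0` or `m1/2` unit coordinates (coordinates
equal to `1` or `3`) in its quaternary part `v`. -/
theorem subcode_units_zero_or_half_m1 {α β : ℕ} (hαβ : 0 < α + β)
    (C C1 : AddSubgroup ((Fin α → ZMod 2) × (Fin β → ZMod 4)))
    (hsub : C1 ≤ C) (hC1ne : C1 ≠ ⊥) (hproper : C1 ≠ C)
    (m1 m : ℕ) (hm1 : 0 < m1) (hm : 0 < m)
    (hw1 : ∀ c ∈ C1, c ≠ 0 → leeWt c = m1)
    (hw : ∀ c ∈ C, c ∉ C1 → leeWt c = m) :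
    ∀ c ∈ C1,
      (Finset.univ.filter fun j : Fin β => c.2 j = 1 ∨ c.2 j = 3).card = 0 ∨
      (Finset.univ.filter fun j : Fin β => c.2 j = 1 ∨ c.2 j = 3).card = m1 / 2 := by
  intro c hc
  by_cases hz : (Finset.univ.filter fun j : Fin β => c.2 j = 1 ∨ c.2 j = 3).card = 0
  · exact Or.inl hz
  right
  obtain ⟨j, hj⟩ := Finset.card_pos.mp (Nat.pos_of_ne_zero hz)
  rw [Finset.mem_filter] at hj
  have hcc : c + c ∈ C1 := add_mem hc hc
  have hne : c + c ≠ 0 := by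
    intro h
    have h2 : c.2 j + c.2 j = 0 := congrFun (congrArg Prod.snd h) j
    rcases hj.2 with h1 | h1 <;> rw [h1] at h2 <;> exact absurd h2 (by decide)
  have hwt := hw1 _ hcc hne
  have h1 : hammingNorm ((c + c).1) = 0 := by
    have : (c + c).1 = 0 := by
      funext i
      exact CharTwo.add_self_eq_zero (c.1 i)
    simp [this]
  have h2 : leeWt (c + c) =
      2 * (Finset.univ.filter fun j : Fin β => c.2 j = 1 ∨ c.2 j = 3).card := by
    rw [leeWt, h1, Nat.zero_add]
    have : ∀ j : Fin β, leeWt4 ((c + c).2 j)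
        = if c.2 j = 1 ∨ c.2 j = 3 then 2 else 0 := fun j => leeWt4_double (c.2 j)
    rw [Finset.sum_congr rfl fun j _ => this j, Finset.sum_ite, Finset.sum_const,
      Finset.sum_const_zero, Nat.add_zero, smul_eq_mul, Nat.mul_comm]
  rw [h2] at hwt
  omega
end
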